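/- Let φ : A* → A* be a morphism, a ∈ A a letter, and w ∈ A* a primitive word such that the words φ^k(a) converge (as prefixes) to the infinite periodic word w^ω, i.e., for every n there is k such that w^n is a prefix of φ^k(a) and φ^k(a) is a prefix of w^ω for all sufficiently large k. Then φ(w) = w^n for some integer n > 1. -/
import Mathlib


/-- The morphism on words induced by a map on letters. -/
def applyM {A B : Type*} (f : A → List B) (w : List A) : List B := (w.map f).flatten

/-- `wpow u n` is the word `u` repeated `n` times. -/
def wpow {A : Type*} (u : List A) (n : ℕ) : List A := (List.replicate n u).flatten

/-- A word is primitive if it is nonempty and not a proper power. -/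
def Primitive {A : Type*} (w : List A) : Prop := w ≠ [] ∧ ∀ u n, w = wpow u n → n = 1

/-- Conjugacy of words. -/
def Conj {A : Type*} (u v : List A) : Prop := ∃ x y, u = x ++ y ∧ v = y ++ x

/-- The language of a D(F)0L system with (iterated) morphism `g` and axiom set `W`:
all factors of all `g^[n] w`, `w ∈ W`. -/
def LangG {A : Type*} (g : List A → List A) (W : Set (List A)) : Set (List A) :=
  {u | ∃ n : ℕ, ∃ w ∈ W, u <:+: g^[n] w}

/-- `(s, w, t)` is an interpretation of `u`: `w` is in the language and `g w = s ++ u ++ t`. -/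
def Interp {A : Type*} (g : List A → List A) (L : Set (List A)) (s w t u : List A) : Prop :=
  w ∈ L ∧ g w = s ++ u ++ t

/-- The pair `(u₁, u₂)` is compatible with the interpretation `(s, w, t)` of `u₁ ++ u₂`. -/
def Compatible {A : Type*} (g : List A → List A) (s w t u₁ u₂ : List A) : Prop :=
  ∃ w₁ w₂, w = w₁ ++ w₂ ∧ g w₁ = s ++ u₁ ∧ g w₂ = u₂ ++ t

/-- Weakly synchronizing pair: compatible with all interpretations of `u₁ ++ u₂`. -/
def WeakSync {A : Type*} (g : List A → List A) (L : Set (List A)) (u₁ u₂ : List A) : Prop :=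
  ∀ s w t, Interp g L s w t (u₁ ++ u₂) → Compatible g s w t u₁ u₂

/-- Strongly synchronizing pair. -/
def StrongSync {A : Type*} (g : List A → List A) (L : Set (List A)) (u₁ u₂ : List A) : Prop :=
  u₁ ≠ [] ∧ ∃ a : A, ∀ s w t, Interp g L s w t (u₁ ++ u₂) →
    ∃ w₁ w₂, w = w₁ ++ w₂ ∧ g w₁ = s ++ u₁ ∧ g w₂ = u₂ ++ t ∧ w₁.getLast? = some a

/-- A word is weakly synchronized if some factorization of it is weakly synchronizing. -/
def WeaklySynchronized {A : Type*} (g : List A → List A) (L : Set (List A)) (u : List A) : Prop :=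
  ∃ u₁ u₂, u = u₁ ++ u₂ ∧ WeakSync g L u₁ u₂

/-- An admissible pair: compatible with at least one interpretation. -/
def Admissible {A : Type*} (g : List A → List A) (L : Set (List A)) (u₁ u₂ : List A) : Prop :=
  ∃ s w t, Interp g L s w t (u₁ ++ u₂) ∧ Compatible g s w t u₁ u₂

/-- A word is bounded if the lengths of its iterated images stay bounded. -/
def BoundedWord {A : Type*} (f : A → List A) (w : List A) : Prop :=
  ∃ C, ∀ k : ℕ, ((applyM f)^[k] w).length ≤ C

/-- `Ω(S)`: primitive words all of whose powers belong to the language. -/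
def Omega {A : Type*} (f : A → List A) (W : Set (List A)) : Set (List A) :=
  {v | v ∈ LangG (applyM f) W ∧ Primitive v ∧ ∀ k : ℕ, wpow v k ∈ LangG (applyM f) W}

/-- Minimal interpretation: `|s| < |f(first letter of w)|` and `|t| < |f(last letter of w)|`. -/
def MinInterp {A : Type*} (f : A → List A) (L : Set (List A)) (s w t u : List A) : Prop :=
  Interp (applyM f) L s w t u ∧ w ≠ [] ∧
    (∀ a, w.head? = some a → s.length < (f a).length) ∧
    (∀ b, w.getLast? = some b → t.length < (f b).length)

section Stmt2Aux

variable {A : Type*}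

lemma wpow_zero (u : List A) : wpow u 0 = [] := rfl

lemma wpow_succ (u : List A) (n : ℕ) : wpow u (n+1) = u ++ wpow u n := by
  simp [wpow, List.replicate_succ]

lemma wpow_one (u : List A) : wpow u 1 = u := by simp [wpow]

lemma wpow_add (u : List A) (m n : ℕ) : wpow u (m+n) = wpow u m ++ wpow u n := by
  induction m with
  | zero => simp [wpow_zero]
  | succ m ih => rw [Nat.succ_add, wpow_succ, wpow_succ, ih, List.append_assoc]

lemma wpow_length (u : List A) (n : ℕ) : (wpow u n).length = n * u.length := by
  induction n with
  | zero => simp [wpow_zero]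
  | succ n ih => rw [wpow_succ, List.length_append, ih]; ring

lemma wpow_nil (n : ℕ) : wpow ([] : List A) n = [] := by
  induction n with
  | zero => rfl
  | succ n ih => rw [wpow_succ, ih]; rfl

lemma applyM_append {B : Type*} (f : A → List B) (x y : List A) :
    applyM f (x ++ y) = applyM f x ++ applyM f y := by
  simp [applyM]

lemma applyM_wpow {B : Type*} (f : A → List B) (u : List A) (n : ℕ) :
    applyM f (wpow u n) = wpow (applyM f u) n := by
  induction n with
  | zero => rfl
  | succ n ih => rw [wpow_succ, applyM_append, ih, wpow_succ]

lemma applyM_prefix {B : Type*} (f : A → List B) {x y : List A} (h : x <+: y) :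
    applyM f x <+: applyM f y := by
  obtain ⟨r, rfl⟩ := h
  rw [applyM_append]; exact List.prefix_append _ _

lemma wpow_prefix (u : List A) {m n : ℕ} (h : m ≤ n) : wpow u m <+: wpow u n := by
  obtain ⟨d, rfl⟩ := Nat.exists_eq_add_of_le h
  rw [wpow_add]; exact List.prefix_append _ _

lemma comm_pow : ∀ (n : ℕ) (u v : List A), u.length + v.length ≤ n →
    u ++ v = v ++ u → ∃ t i j, u = wpow t i ∧ v = wpow t j := by
  intro n
  induction n with
  | zero =>
    intro u v hl _
    have hu : u = [] := by
      cases u with | nil => rfl | cons a l => simp at hl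
    have hv : v = [] := by
      cases v with | nil => rfl | cons a l => simp at hl
    exact ⟨[], 0, 0, by simp [hu, wpow_zero], by simp [hv, wpow_zero]⟩
  | succ n ih =>
    intro u v hl h
    rcases eq_or_ne u [] with rfl | hu
    · exact ⟨v, 0, 1, rfl, (wpow_one v).symm⟩
    rcases eq_or_ne v [] with rfl | hv
    · exact ⟨u, 1, 0, (wpow_one u).symm, rfl⟩
    have hu0 : 0 < u.length := List.length_pos_iff.mpr hu
    have hv0 : 0 < v.length := List.length_pos_iff.mpr hv
    rcases le_or_gt u.length v.length with hle | hlt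
    · have hup : u <+: v := by
        refine List.prefix_of_prefix_length_le ?_ (List.prefix_append v u) hle
        rw [← h]; exact List.prefix_append u v
      obtain ⟨r, hr⟩ := hup
      have hcomm : u ++ r = r ++ u := by
        have h2 : u ++ (u ++ r) = (u ++ r) ++ u := by rw [hr]; exact h
        rw [List.append_assoc] at h2
        exact List.append_cancel_left h2
      have hlen : u.length + r.length ≤ n := by
        have : v.length = u.length + r.length := by rw [← hr]; simp
        omega
      obtain ⟨t, i, j, hti, htj⟩ := ih u r hlen hcomm
      exact ⟨t, i, i + j, hti, by rw [← hr, wpow_add, ← hti, ← htj]⟩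
    · have hvp : v <+: u := by
        refine List.prefix_of_prefix_length_le ?_ (List.prefix_append u v) (le_of_lt hlt)
        rw [h]; exact List.prefix_append v u
      obtain ⟨r, hr⟩ := hvp
      have hcomm : v ++ r = r ++ v := by
        have h2 : v ++ (v ++ r) = (v ++ r) ++ v := by rw [hr]; exact h.symm
        rw [List.append_assoc] at h2
        exact List.append_cancel_left h2
      have hlen : v.length + r.length ≤ n := by
        have : u.length = v.length + r.length := by rw [← hr]; simp
        omega
      obtain ⟨t, i, j, hti, htj⟩ := ih v r hlen hcomm
      exact ⟨t, i + j, i, by rw [← hr, wpow_add, ← hti, ← htj], hti⟩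

lemma prefix_pow_pow {u w : List A} (hw : Primitive w) {n m : ℕ}
    (hn : w.length + 1 ≤ n) (h : wpow u n <+: wpow w m) :
    ∃ i, u = wpow w i := by
  rcases eq_or_ne u [] with rfl | hu
  · exact ⟨0, (wpow_zero w).symm⟩
  have hwne := hw.1
  have hw0 : 0 < w.length := List.length_pos_iff.mpr hwne
  have hu0 : 0 < u.length := List.length_pos_iff.mpr hu
  have hm : 1 ≤ m := by
    by_contra hm
    interval_cases m
    have := h.length_le
    rw [wpow_length, wpow_length] at this
    nlinarith
  obtain ⟨n', rfl⟩ : ∃ n', n = n' + 1 := ⟨n - 1, by omega⟩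
  have h1 : wpow u n' <+: wpow w m := (wpow_prefix u (Nat.le_succ n')).trans h
  have h2 : w <+: wpow w m := by
    have := wpow_prefix w hm
    rwa [wpow_one] at this
  have hlen : w.length ≤ (wpow u n').length := by
    rw [wpow_length]; nlinarith
  have h3 : w <+: wpow u n' := List.prefix_of_prefix_length_le h2 h1 hlen
  have h4 : u ++ w <+: wpow w (m+1) := by
    have h4' : u ++ w <+: wpow u (n'+1) := by
      rw [wpow_succ]
      exact (List.prefix_append_right_inj u).mpr h3
    exact h4'.trans (h.trans (wpow_prefix w (Nat.le_succ m)))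
  have h5 : w ++ u <+: wpow w (m+1) := by
    have hu' : u <+: wpow w m := by
      have := wpow_prefix u (by omega : 1 ≤ n' + 1)
      rw [wpow_one] at this
      exact this.trans h
    rw [wpow_succ]
    exact (List.prefix_append_right_inj w).mpr hu'
  have heq : u ++ w = w ++ u := by
    refine (List.prefix_of_prefix_length_le h4 h5 (by simp [Nat.add_comm])).eq_of_length ?_
    simp [Nat.add_comm]
  obtain ⟨t, i, j, hti, htj⟩ := comm_pow (u.length + w.length) u w le_rfl heq
  have hj : j = 1 := hw.2 t j htj
  subst hj
  rw [wpow_one] at htj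
  exact ⟨i, by rw [hti, htj]⟩

lemma decomp {w x : List A} (hw0 : 0 < w.length) {m : ℕ} (h : x <+: wpow w m) :
    ∃ q p, p <+: w ∧ x = wpow w q ++ p := by
  set q := x.length / w.length with hq
  have hxm : x.length ≤ m * w.length := by
    have := h.length_le; rwa [wpow_length] at this
  have hqm : q ≤ m := by
    rw [hq]
    calc x.length / w.length ≤ m * w.length / w.length := Nat.div_le_div_right hxm
    _ = m := Nat.mul_div_cancel m hw0
  have h1 : wpow w q <+: x := by
    refine List.prefix_of_prefix_length_le (wpow_prefix w hqm) h ?_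
    rw [wpow_length, hq]
    exact Nat.div_mul_le_self _ _
  obtain ⟨p, hp⟩ := h1
  have hplen : p.length < w.length := by
    have hdm : q * w.length + x.length % w.length = x.length := by
      rw [hq, Nat.mul_comm]
      exact Nat.div_add_mod _ _
    have hxl : x.length = q * w.length + p.length := by
      rw [← hp]; simp [wpow_length]
    have hmod := Nat.mod_lt x.length hw0
    linarith
  have hpw : p <+: w := by
    have hsub : p <+: wpow w (m - q) := by
      have : wpow w q ++ p <+: wpow w q ++ wpow w (m - q) := by
        rw [← wpow_add, Nat.add_sub_cancel' hqm, hp]; exact h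
      exact (List.prefix_append_right_inj _).mp this
    rcases Nat.eq_zero_or_pos (m - q) with hz | hpos
    · rw [hz, wpow_zero] at hsub
      rw [List.prefix_nil.mp hsub]
      exact List.nil_prefix
    · have hwp : w <+: wpow w (m - q) := by
        have := wpow_prefix w hpos
        rwa [wpow_one] at this
      exact List.prefix_of_prefix_length_le hsub hwp (le_of_lt hplen)
  exact ⟨q, p, hpw, hp.symm⟩

end Stmt2Aux
theorem stmt2 {A : Type*} (f : A → List A) (a : A) (w : List A)
    (hw : Primitive w)
    (h1 : ∀ n : ℕ, ∃ k : ℕ, wpow w n <+: (applyM f)^[k] [a])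
    (h2 : ∃ K : ℕ, ∀ k ≥ K, ∃ m : ℕ, (applyM f)^[k] [a] <+: wpow w m) :
    ∃ n : ℕ, 1 < n ∧ applyM f w = wpow w n := by
  obtain ⟨K, hK⟩ := h2
  have hwne : w ≠ [] := hw.1
  have hw0 : 0 < w.length := List.length_pos_iff.mpr hwne
  set B := (Finset.range (K+1)).sup (fun k => ((applyM f)^[k] [a]).length) with hBdef
  have hB : ∀ k ≤ K, ((applyM f)^[k] [a]).length ≤ B := by
    intro k hk
    exact Finset.le_sup (f := fun k => ((applyM f)^[k] [a]).length)
      (Finset.mem_range.mpr (by omega))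
  set n₀ := B + w.length + 2 with hn₀
  obtain ⟨k, hk⟩ := h1 n₀
  have hlenk : n₀ * w.length ≤ ((applyM f)^[k] [a]).length := by
    have := hk.length_le; rwa [wpow_length] at this
  have hkK : K ≤ k := by
    by_contra hc
    have hb := hB k (by omega)
    nlinarith
  obtain ⟨r, hr⟩ := hk
  have hnext : wpow (applyM f w) n₀ <+: (applyM f)^[k+1] [a] := by
    rw [Function.iterate_succ_apply', ← hr, applyM_append, applyM_wpow]
    exact List.prefix_append _ _
  obtain ⟨m, hm⟩ := hK (k+1) (by omega)
  obtain ⟨i, hi⟩ := prefix_pow_pow hw (by omega) (hnext.trans hm)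
  match i, hi with
  | 0, hi =>
    exfalso
    rw [wpow_zero] at hi
    have hz : ∀ k', K ≤ k' → (applyM f)^[k'+1] [a] = [] := by
      intro k' hk'
      obtain ⟨m', hm'⟩ := hK k' hk'
      have hpre := applyM_prefix f hm'
      rw [applyM_wpow, hi, wpow_nil] at hpre
      rw [Function.iterate_succ_apply']
      exact List.prefix_nil.mp hpre
    obtain ⟨k', hk'⟩ := h1 (B + 1)
    have hlen' : (B + 1) * w.length ≤ ((applyM f)^[k'] [a]).length := by
      have := hk'.length_le; rwa [wpow_length] at this
    have hLL : B + 1 ≤ (B + 1) * w.length := Nat.le_mul_of_pos_right _ hw0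
    rcases le_or_gt k' K with hle | hgt
    · have := hB k' hle; linarith
    · obtain ⟨k'', rfl⟩ : ∃ k'', k' = k'' + 1 := ⟨k' - 1, by omega⟩
      rw [hz k'' (by omega), List.length_nil, Nat.le_zero, Nat.mul_eq_zero] at hlen'
      omega
  | 1, hi =>
    exfalso
    rw [wpow_one] at hi
    obtain ⟨m0, hm0⟩ := hK K le_rfl
    obtain ⟨q₀, p₀, hp₀, hx₀⟩ := decomp hw0 hm0
    have inv : ∀ j : ℕ, ∃ p, p <+: w ∧ (applyM f)^[K+j] [a] = wpow w q₀ ++ p := by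
      intro j
      induction j with
      | zero => exact ⟨p₀, hp₀, hx₀⟩
      | succ j ih =>
        obtain ⟨p, hp, hx⟩ := ih
        obtain ⟨s, hs⟩ := hp
        refine ⟨applyM f p, ⟨applyM f s, by rw [← applyM_append, hs, hi]⟩, ?_⟩
        have : K + (j+1) = (K+j) + 1 := rfl
        rw [this, Function.iterate_succ_apply', hx, applyM_append, applyM_wpow, hi]
    have bound : ∀ k' : ℕ, K ≤ k' → ((applyM f)^[k'] [a]).length ≤ (q₀+1) * w.length := by
      intro k' hk'
      obtain ⟨p, hp, hx⟩ := inv (k' - K)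
      rw [Nat.add_sub_cancel' hk'] at hx
      rw [hx, List.length_append, wpow_length]
      have := hp.length_le
      nlinarith
    obtain ⟨k', hk'⟩ := h1 (B + (q₀+1) * w.length + 1)
    have hlen' : (B + (q₀+1) * w.length + 1) * w.length ≤ ((applyM f)^[k'] [a]).length := by
      have := hk'.length_le; rwa [wpow_length] at this
    have hLL : B + (q₀+1) * w.length + 1 ≤ (B + (q₀+1) * w.length + 1) * w.length :=
      Nat.le_mul_of_pos_right _ hw0
    rcases le_or_gt k' K with hle | hgt
    · have := hB k' hle; linarith [Nat.zero_le ((q₀+1) * w.length)]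
    · have := bound k' (le_of_lt hgt); linarith
  | (i+2), hi => exact ⟨i+2, by omega, hi⟩
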